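/- Let D be a linearly connected digraph with η ≥ 2 strong components, all nontrivial, and suppose the sequence {C(D^m)}_{m≥1} converges to a graph G. Then every connected component of G is a complete graph (i.e., any two distinct vertices lying in the same connected component of G are adjacent in G) if and only if for every p = 1, ..., η−1: κ_η divides κ_p, and for all (i, j), (i', j') ∈ I(D_{p,p+1}) one has red(i) − red(j) = red(i') − red(j') in ZMod κ_η, where red denotes the natural reduction homomorphisms ZMod κ_p → ZMod κ_η and ZMod κ_{p+1} → ZMod κ_η (well defined given the divisibility conditions). -/

import Mathlib

/-- A digraph: a finite vertex type with an irreflexive arc relation (no loops). -/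
structure Digraph' (V : Type*) where
  Adj : V → V → Prop
  irrefl : ∀ v, ¬ Adj v v

namespace Digraph'

variable {V : Type*}

/-- There is a directed walk of length `m` from `x` to `y` in `D`;
i.e. `y` is an `m`-step prey of `x`. -/
def HasWalk (D : Digraph' V) (m : ℕ) (x y : V) : Prop :=
  ∃ f : ℕ → V, f 0 = x ∧ f m = y ∧ ∀ t, t < m → D.Adj (f t) (f (t + 1))

/-- There is a directed walk of length `m` from `x` to `y` staying inside `S`. -/
def HasWalkIn (D : Digraph' V) (S : Set V) (m : ℕ) (x y : V) : Prop :=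
  ∃ f : ℕ → V, f 0 = x ∧ f m = y ∧ (∀ t, t ≤ m → f t ∈ S) ∧
    ∀ t, t < m → D.Adj (f t) (f (t + 1))

/-- The `m`-step competition graph `C(D^m)` of `D`. -/
def compGraph (D : Digraph' V) (m : ℕ) : SimpleGraph V where
  Adj u v := u ≠ v ∧ ∃ z, D.HasWalk m u z ∧ D.HasWalk m v z
  symm := by
    constructor
    rintro u v ⟨hne, z, h1, h2⟩
    exact ⟨hne.symm, z, h2, h1⟩
  loopless := ⟨fun v h => h.1 rfl⟩

/-- The sequence `{C(D^m)}_{m ≥ 1}` converges. -/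
def CompConverges (D : Digraph' V) : Prop :=
  ∃ N : ℕ, 1 ≤ N ∧ ∀ m, N ≤ m → D.compGraph m = D.compGraph N

/-- The sequence `{C(D^m)}_{m ≥ 1}` converges to the graph `G`. -/
def CompConvergesTo (D : Digraph' V) (G : SimpleGraph V) : Prop :=
  ∃ N : ℕ, 1 ≤ N ∧ ∀ m, N ≤ m → D.compGraph m = G

/-- `D` is linearly connected with strong components `Vset 1, …, Vset η`. -/
structure IsLinConn (D : Digraph' V) (η : ℕ) (Vset : ℕ → Set V) : Prop where
  nonempty : ∀ i, 1 ≤ i → i ≤ η → (Vset i).Nonempty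
  cover : ∀ v : V, ∃ i, 1 ≤ i ∧ i ≤ η ∧ v ∈ Vset i
  disjoint' : ∀ i j, 1 ≤ i → i ≤ η → 1 ≤ j → j ≤ η →
      ∀ v : V, v ∈ Vset i → v ∈ Vset j → i = j
  strong : ∀ i, 1 ≤ i → i ≤ η → ∀ x ∈ Vset i, ∀ y ∈ Vset i,
      ∃ m, D.HasWalkIn (Vset i) m x y
  arcs : ∀ x y : V, D.Adj x y → ∃ i, 1 ≤ i ∧
      ((i ≤ η ∧ x ∈ Vset i ∧ y ∈ Vset i) ∨
       (i + 1 ≤ η ∧ x ∈ Vset i ∧ y ∈ Vset (i + 1)))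
  linked : ∀ i, 1 ≤ i → i + 1 ≤ η → ∃ x ∈ Vset i, ∃ y ∈ Vset (i + 1), D.Adj x y

/-- A component with vertex set `S` is trivial if `S` is a singleton. -/
def IsTrivialComp (S : Set V) : Prop := ∃ v : V, S = {v}

/-- `κ` is the index of imprimitivity of the (strong) component with vertex set `S`:
the gcd of the lengths of all closed directed walks inside `S`. -/
def IsImprimIndex (D : Digraph' V) (S : Set V) (κ : ℕ) : Prop :=
  (∀ (x : V) (m : ℕ), x ∈ S → 0 < m → D.HasWalkIn S m x x → κ ∣ m) ∧
  ∀ d : ℕ, (∀ (x : V) (m : ℕ), x ∈ S → 0 < m → D.HasWalkIn S m x x → d ∣ m) → d ∣ κ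

/-- `u` is an imprimitivity labelling on `S`: along any arc inside `S` the label
increases by one.  Its fibers are the sets of imprimitivity. -/
def IsImprimLabelling (D : Digraph' V) (S : Set V) {κ : ℕ} (u : V → ZMod κ) : Prop :=
  ∀ x ∈ S, ∀ y ∈ S, D.Adj x y → u y = u x + 1

/-- `(k, l) ∈ I(D_{p,p+1})`: some arc goes from a vertex of `U_k^{(p)}` to a vertex of
`U_l^{(p+1)}`. -/
def InI (D : Digraph' V) (Vset : ℕ → Set V) {κ : ℕ → ℕ}
    (u : ∀ i : ℕ, V → ZMod (κ i)) (p : ℕ) (k : ZMod (κ p)) (l : ZMod (κ (p + 1))) : Prop :=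
  ∃ x ∈ Vset p, ∃ y ∈ Vset (p + 1), D.Adj x y ∧ u p x = k ∧ u (p + 1) y = l

/-- `(i, j)` is an edge of the bipartite graph `B_{p,p+1}`. -/
def BAdj (D : Digraph' V) (Vset : ℕ → Set V) {κ : ℕ → ℕ}
    (u : ∀ i : ℕ, V → ZMod (κ i)) (p : ℕ) (i : ZMod (κ p)) (j : ZMod (κ (p + 1))) : Prop :=
  ∃ (k : ZMod (κ p)) (l : ZMod (κ (p + 1))) (a : ℤ),
    InI D Vset u p k l ∧ i = k + 1 + (a : ZMod (κ p)) ∧ j = l + (a : ZMod (κ (p + 1)))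

/-- The competition skeleton graph (CS-graph) `PT_D^{(η)}`: vertices are pairs `⟨r, i⟩`
with `i ∈ ZMod (κ r)` (only `1 ≤ r ≤ η` carries edges); `⟨p, i⟩` and `⟨p+1, j⟩` are
adjacent exactly when `i` and `j` are adjacent in `B_{p,p+1}`. -/
def csGraph (D : Digraph' V) (Vset : ℕ → Set V) {κ : ℕ → ℕ}
    (u : ∀ i : ℕ, V → ZMod (κ i)) (η : ℕ) : SimpleGraph ((r : ℕ) × ZMod (κ r)) where
  Adj a b := ∃ p, 1 ≤ p ∧ p + 1 ≤ η ∧ ∃ (i : ZMod (κ p)) (j : ZMod (κ (p + 1))),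
    BAdj D Vset u p i j ∧
    ((a = ⟨p, i⟩ ∧ b = ⟨p + 1, j⟩) ∨ (a = ⟨p + 1, j⟩ ∧ b = ⟨p, i⟩))
  symm := by
    constructor
    rintro a b ⟨p, h1, h2, i, j, hB, hab⟩
    exact ⟨p, h1, h2, i, j, hB,
      hab.elim (fun h => Or.inr ⟨h.2, h.1⟩) (fun h => Or.inl ⟨h.2, h.1⟩)⟩
  loopless := by
    constructor
    rintro a ⟨p, _, _, i, j, _, hab⟩
    rcases hab with ⟨ha, hb⟩ | ⟨ha, hb⟩
    · have h : p = p + 1 := congrArg Sigma.fst (ha.symm.trans hb)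
      omega
    · have h : p + 1 = p := congrArg Sigma.fst (ha.symm.trans hb)
      omega

end Digraph'

/-!
Write `ℓ = u_η` for the labelling of the last component `D_η`. Walks cannot leave `D_η`, and
inside `D_η` every long enough length in the right residue class mod `κ_η` is realised (the set
of lengths of closed walks at a vertex is a numerical semigroup of gcd `κ_η`). Since every vertex
reaches `D_η`, each vertex `x` has a prey class `c`: for all large `m`, `x` has an `m`-step walk to
every `w ∈ D_η` with `ℓ w = c + m`. Two vertices with a common prey class are adjacent in the limit
`G`, while two adjacent vertices of `D_η` carry the same label.

So the components of `G` are cliques iff every vertex has a unique prey class, iff there is a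
potential `ψ : V → ZMod κ_η` increasing by one along every arc (then the prey class of `x` is
`ψ x`). On `D_p` such a `ψ` is a labelling mod `κ_η`, which forces `κ_η ∣ κ_p` and makes
`ψ - red ∘ u_p` constant on `D_p`; comparing these constants across arcs `D_p → D_{p+1}` gives the
constant differences. Conversely, divisibility and constant differences let the reduced labellings
`red ∘ u_p`, shifted by suitable constants, be glued into a potential.
-/

namespace Digraph'

open Filter Set

variable {V : Type*} {D : Digraph' V} {S T : Set V} {m n : ℕ} {x y z : V}

lemma hasWalk_iff_hasWalkIn_univ : D.HasWalk m x y ↔ D.HasWalkIn univ m x y := by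
  simp [HasWalk, HasWalkIn]

lemma HasWalkIn.hasWalk (h : D.HasWalkIn S m x y) : D.HasWalk m x y :=
  let ⟨f, hf0, hfm, _, hf⟩ := h
  ⟨f, hf0, hfm, hf⟩

lemma hasWalkIn_zero (hx : x ∈ S) : D.HasWalkIn S 0 x x :=
  ⟨fun _ => x, rfl, rfl, fun _ _ => hx, fun _ h => absurd h (Nat.not_lt_zero _)⟩

lemma hasWalkIn_one (hx : x ∈ S) (hy : y ∈ S) (h : D.Adj x y) : D.HasWalkIn S 1 x y :=
  ⟨fun t => if t = 0 then x else y, rfl, rfl, fun t _ => by dsimp only; split_ifs <;> assumption,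
    fun t ht => by simpa [Nat.lt_one_iff.1 ht] using h⟩

lemma HasWalkIn.append (h₁ : D.HasWalkIn S m x y) (h₂ : D.HasWalkIn S n y z) :
    D.HasWalkIn S (m + n) x z := by
  obtain ⟨f, hf0, hfm, hfS, hf⟩ := h₁
  obtain ⟨g, hg0, hgn, hgS, hg⟩ := h₂
  refine ⟨fun t => if t ≤ m then f t else g (t - m), by simp [hf0], ?_, fun t ht => ?_,
    fun t ht => ?_⟩
  · rcases n.eq_zero_or_pos with rfl | hn
    · simp [hfm, ← hgn, hg0]
    · simp [show ¬ m + n ≤ m by omega, hgn]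
  · dsimp only
    split_ifs
    exacts [hfS t ‹_›, hgS _ (by omega)]
  · rcases lt_trichotomy t m with htm | rfl | htm
    · simpa [htm.le, Nat.succ_le_of_lt htm] using hf t htm
    · simpa [hfm, ← hg0] using hg 0 (by omega)
    · simpa [htm.not_ge, show ¬ t + 1 ≤ m by omega, Nat.sub_add_comm htm.le] using
        hg (t - m) (by omega)

lemma HasWalk.append (h₁ : D.HasWalk m x y) (h₂ : D.HasWalk n y z) : D.HasWalk (m + n) x z := by
  rw [hasWalk_iff_hasWalkIn_univ] at *
  exact h₁.append h₂

lemma hasWalk_one (h : D.Adj x y) : D.HasWalk 1 x y :=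
  (hasWalkIn_one (mem_univ x) (mem_univ y) h).hasWalk

lemma HasWalk.hasWalkIn_of_forall_adj (hS : ∀ x ∈ S, ∀ y, D.Adj x y → y ∈ S) (hx : x ∈ S)
    (h : D.HasWalk m x y) : D.HasWalkIn S m x y := by
  obtain ⟨f, hf0, hfm, hf⟩ := h
  refine ⟨f, hf0, hfm, fun t ht => ?_, hf⟩
  induction t with
  | zero => exact hf0 ▸ hx
  | succ t ih => exact hS _ (ih (by omega)) _ (hf t (by omega))

def IsStronglyConnectedOn (D : Digraph' V) (S : Set V) : Prop :=
  ∀ x ∈ S, ∀ y ∈ S, ∃ m, D.HasWalkIn S m x y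

section Labelling

variable {K κ : ℕ} {ℓ : V → ZMod K}

lemma IsImprimLabelling.eq_add_of_hasWalkIn (hℓ : D.IsImprimLabelling S ℓ)
    (h : D.HasWalkIn S m x y) : ℓ y = ℓ x + m := by
  obtain ⟨f, rfl, rfl, hfS, hf⟩ := h
  induction m with
  | zero => simp
  | succ m ih =>
    rw [hℓ _ (hfS m (by omega)) _ (hfS _ le_rfl) (hf m (by omega)),
      ih (fun t ht => hfS t (by omega)) (fun t ht => hf t (by omega))]
    push_cast
    ring

lemma IsImprimLabelling.mono (hℓ : D.IsImprimLabelling T ℓ) (hST : S ⊆ T) :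
    D.IsImprimLabelling S ℓ :=
  fun x hx y hy => hℓ x (hST hx) y (hST hy)

lemma IsImprimLabelling.cast {u : V → ZMod κ} (hu : D.IsImprimLabelling S u) (hK : K ∣ κ) :
    D.IsImprimLabelling S (fun x => (ZMod.cast (u x) : ZMod K)) :=
  fun x hx y hy h => by simp only [hu x hx y hy h, ZMod.cast_add hK, ZMod.cast_one hK]

lemma IsImprimIndex.dvd_of_isImprimLabelling (hκ : D.IsImprimIndex S κ)
    (hℓ : D.IsImprimLabelling S ℓ) : K ∣ κ :=
  hκ.2 K fun _ m _ _ h =>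
    (ZMod.natCast_eq_zero_iff m K).1 <| by simpa using hℓ.eq_add_of_hasWalkIn h

lemma IsImprimLabelling.sub_eq_sub {ℓ' : V → ZMod K} (hS : D.IsStronglyConnectedOn S)
    (hℓ : D.IsImprimLabelling S ℓ) (hℓ' : D.IsImprimLabelling S ℓ') (hx : x ∈ S) (hy : y ∈ S) :
    ℓ y - ℓ' y = ℓ x - ℓ' x := by
  obtain ⟨m, h⟩ := hS x hx y hy
  rw [hℓ.eq_add_of_hasWalkIn h, hℓ'.eq_add_of_hasWalkIn h]
  ring

lemma IsStronglyConnectedOn.exists_adj (hS : D.IsStronglyConnectedOn S)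
    (hnt : ¬ IsTrivialComp S) (hx : x ∈ S) : ∃ y ∈ S, D.Adj x y := by
  obtain ⟨w, hw, hwx⟩ : ∃ w ∈ S, w ≠ x := by
    by_contra! h
    exact hnt ⟨x, eq_singleton_iff_unique_mem.2 ⟨hx, h⟩⟩
  obtain ⟨m, f, hf0, hfm, hfS, hf⟩ := hS x hx w hw
  have hm : 0 < m := Nat.pos_of_ne_zero (by rintro rfl; exact hwx (hfm ▸ hf0))
  exact ⟨f 1, hfS 1 hm, hf0 ▸ hf 0 hm⟩

lemma IsStronglyConnectedOn.exists_hasWalkIn (hS : D.IsStronglyConnectedOn S)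
    (hnt : ¬ IsTrivialComp S) (n : ℕ) (hx : x ∈ S) : ∃ y ∈ S, D.HasWalkIn S n x y := by
  induction n with
  | zero => exact ⟨x, hx, hasWalkIn_zero hx⟩
  | succ n ih =>
    obtain ⟨y, hy, hxy⟩ := ih
    obtain ⟨z, hz, hyz⟩ := hS.exists_adj hnt hy
    exact ⟨z, hz, hxy.append (hasWalkIn_one hy hz hyz)⟩

lemma IsImprimIndex.ne_zero (hκ : D.IsImprimIndex S κ) (hS : D.IsStronglyConnectedOn S)
    (hnt : ¬ IsTrivialComp S) (hne : S.Nonempty) : κ ≠ 0 := by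
  obtain ⟨x, hx⟩ := hne
  obtain ⟨y, hy, hxy⟩ := hS.exists_adj hnt hx
  obtain ⟨m, hyx⟩ := hS y hy x hx
  rintro rfl
  simpa using hκ.1 x (1 + m) hx (by omega) ((hasWalkIn_one hx hy hxy).append hyx)

lemma IsImprimLabelling.surjOn [NeZero K] (hℓ : D.IsImprimLabelling S ℓ)
    (hS : D.IsStronglyConnectedOn S) (hnt : ¬ IsTrivialComp S) (hne : S.Nonempty) :
    SurjOn ℓ S univ := by
  obtain ⟨x, hx⟩ := hne
  intro c _
  obtain ⟨y, hy, hxy⟩ := hS.exists_hasWalkIn hnt (c - ℓ x).val hx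
  exact ⟨y, hy, by rw [hℓ.eq_add_of_hasWalkIn hxy, ZMod.natCast_zmod_val, add_sub_cancel]⟩

lemma IsImprimIndex.eventually_hasWalkIn_self (hκ : D.IsImprimIndex S κ)
    (hS : D.IsStronglyConnectedOn S) (hx : x ∈ S) :
    ∀ᶠ m in atTop, κ ∣ m → D.HasWalkIn S m x x := by
  set A : Set ℕ := {m | D.HasWalkIn S m x x}
  -- a closed walk at `y` conjugated by walks between `x` and `y` gives two closed walks at `x`
  have hA : Nat.setGcd A = κ := by
    refine Nat.dvd_antisymm (hκ.2 _ fun y m hy _ hyy => ?_) (Nat.dvd_setGcd_iff.2 fun m hm => ?_)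
    · obtain ⟨a, hxy⟩ := hS x hx y hy
      obtain ⟨b, hyx⟩ := hS y hy x hx
      have h₁ := Nat.setGcd_dvd_of_mem (s := A) (hxy.append hyx)
      have h₂ := Nat.setGcd_dvd_of_mem (s := A) ((hxy.append hyy).append hyx)
      rwa [show a + m + b = a + b + m by ring, Nat.dvd_add_right h₁] at h₂
    · rcases m.eq_zero_or_pos with rfl | hm₀
      · exact dvd_zero κ
      · exact hκ.1 x m hx hm₀ hm
  obtain ⟨N, hN⟩ := Nat.exists_mem_closure_of_ge A
  refine eventually_atTop.2 ⟨N, fun m hm hκm => ?_⟩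
  exact AddSubmonoid.closure_induction (fun _ h => h) (hasWalkIn_zero hx)
    (fun _ _ _ _ h₁ h₂ => h₁.append h₂) (hN m hm (hA ▸ hκm))

lemma IsImprimIndex.eventually_hasWalkIn_of_mem {u : V → ZMod κ} (hκ : D.IsImprimIndex S κ)
    (hS : D.IsStronglyConnectedOn S) (hu : D.IsImprimLabelling S u) (hx : x ∈ S) (hy : y ∈ S) :
    ∀ᶠ m : ℕ in atTop, (m : ZMod κ) = u y - u x → D.HasWalkIn S m x y := by
  obtain ⟨d, hxy⟩ := hS x hx y hy
  filter_upwards [(tendsto_sub_atTop_nat d).eventually (hκ.eventually_hasWalkIn_self hS hx),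
    eventually_ge_atTop d] with m hm hdm hmu
  have hmd : (m : ZMod κ) = d := by rw [hmu, hu.eq_add_of_hasWalkIn hxy, add_sub_cancel_left]
  have := (hm ((Nat.modEq_iff_dvd' hdm).1 ((ZMod.natCast_eq_natCast_iff _ _ _).1 hmd.symm))).append
    hxy
  rwa [Nat.sub_add_cancel hdm] at this

lemma IsImprimIndex.eventually_hasWalkIn [Finite V] {u : V → ZMod κ}
    (hκ : D.IsImprimIndex S κ) (hS : D.IsStronglyConnectedOn S) (hu : D.IsImprimLabelling S u) :
    ∀ᶠ m : ℕ in atTop, ∀ x ∈ S, ∀ y ∈ S, (m : ZMod κ) = u y - u x → D.HasWalkIn S m x y :=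
  eventually_all.2 fun _ => eventually_imp_distrib_left.2 fun hx =>
    eventually_all.2 fun _ => eventually_imp_distrib_left.2 fun hy =>
      hκ.eventually_hasWalkIn_of_mem hS hu hx hy

end Labelling

def PreysEventually (D : Digraph' V) (T : Set V) {K : ℕ} (ℓ : V → ZMod K) (x : V)
    (c : ZMod K) : Prop :=
  ∀ᶠ m : ℕ in atTop, ∀ z ∈ T, ℓ z = c + m → D.HasWalk m x z

section Prey

variable {K : ℕ} {ℓ : V → ZMod K} {c : ZMod K} {G : SimpleGraph V}

lemma PreysEventually.of_hasWalk (h : D.PreysEventually T ℓ y c) (hxy : D.HasWalk n x y) :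
    D.PreysEventually T ℓ x (c - n) := by
  filter_upwards [(tendsto_sub_atTop_nat n).eventually h, eventually_ge_atTop n] with
    m hm hnm z hz hzc
  have := hxy.append (hm z hz (by rw [hzc, Nat.cast_sub hnm]; ring))
  rwa [Nat.add_sub_cancel' hnm] at this

lemma IsImprimIndex.preysEventually [Finite V] (hκ : D.IsImprimIndex T K)
    (hT : D.IsStronglyConnectedOn T) (hℓ : D.IsImprimLabelling T ℓ) (hz : z ∈ T) :
    D.PreysEventually T ℓ z (ℓ z) := by
  filter_upwards [hκ.eventually_hasWalkIn hT hℓ] with m hm w hw hwz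
  exact (hm z hz w hw (by rw [hwz]; ring)).hasWalk

lemma exists_preysEventually (hreach : ∀ x, ∃ m, ∃ z ∈ T, D.HasWalk m x z)
    (hT : ∀ z ∈ T, D.PreysEventually T ℓ z (ℓ z)) (x : V) : ∃ c, D.PreysEventually T ℓ x c :=
  let ⟨_, z, hz, hxz⟩ := hreach x
  ⟨_, (hT z hz).of_hasWalk hxz⟩

lemma PreysEventually.eq_of_forall_hasWalk (h : D.PreysEventually T ℓ x c)
    (hsurj : SurjOn ℓ T univ) {a : ZMod K}
    (ha : ∀ m, ∀ z ∈ T, D.HasWalk m x z → ℓ z = a + m) : c = a := by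
  obtain ⟨m, hm⟩ := h.exists
  obtain ⟨z, hz, hzc⟩ := hsurj (mem_univ (c + m))
  exact add_right_cancel (hzc.symm.trans (ha m z hz (hm z hz hzc)))

lemma PreysEventually.compGraph_adj (hG : ∀ᶠ m in atTop, D.compGraph m = G)
    (hsurj : SurjOn ℓ T univ) (hx : D.PreysEventually T ℓ x c)
    (hy : D.PreysEventually T ℓ y c) (hxy : x ≠ y) : G.Adj x y := by
  obtain ⟨m, hmG, hmx, hmy⟩ := (hG.and (hx.and hy)).exists
  obtain ⟨z, hz, hzc⟩ := hsurj (mem_univ (c + m))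
  rw [← hmG]
  exact ⟨hxy, z, hmx z hz hzc, hmy z hz hzc⟩

lemma eq_of_compGraph_adj {A : Set V} {φ : V → ZMod K} (hG : ∀ᶠ m in atTop, D.compGraph m = G)
    (hφ : ∀ m, ∀ x ∈ A, ∀ z, D.HasWalk m x z → φ z = φ x + m) (hx : x ∈ A) (hy : y ∈ A)
    (hxy : G.Adj x y) : φ x = φ y := by
  obtain ⟨m, hm⟩ := hG.exists
  rw [← hm] at hxy
  obtain ⟨-, z, hxz, hyz⟩ := hxy
  exact add_right_cancel ((hφ m x hx z hxz).symm.trans (hφ m y hy z hyz))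

theorem exists_potential_of_reachable_imp_adj (hG : ∀ᶠ m in atTop, D.compGraph m = G)
    (hsurj : SurjOn ℓ T univ) (hℓ : ∀ m, ∀ z ∈ T, ∀ w, D.HasWalk m z w → ℓ w = ℓ z + m)
    (hT : ∀ z ∈ T, D.PreysEventually T ℓ z (ℓ z)) (hprey : ∀ x, ∃ c, D.PreysEventually T ℓ x c)
    (hclique : ∀ x y, x ≠ y → G.Reachable x y → G.Adj x y) :
    ∃ ψ : V → ZMod K, D.IsImprimLabelling univ ψ := by
  have huniq : ∀ x c c', D.PreysEventually T ℓ x c → D.PreysEventually T ℓ x c' → c = c' := by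
    intro x c c' hc hc'
    by_cases hx : x ∈ T
    · rw [hc.eq_of_forall_hasWalk hsurj fun m w _ => hℓ m x hx w,
        hc'.eq_of_forall_hasWalk hsurj fun m w _ => hℓ m x hx w]
    obtain ⟨z, hz, rfl⟩ := hsurj (mem_univ c)
    obtain ⟨z', hz', rfl⟩ := hsurj (mem_univ c')
    have hxz := hc.compGraph_adj hG hsurj (hT z hz) (ne_of_mem_of_not_mem hz hx).symm
    have hxz' := hc'.compGraph_adj hG hsurj (hT z' hz') (ne_of_mem_of_not_mem hz' hx).symm
    rcases eq_or_ne z z' with rfl | hzz'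
    · rfl
    exact eq_of_compGraph_adj hG hℓ hz hz'
      (hclique z z' hzz' (hxz.reachable.symm.trans hxz'.reachable))
  choose ψ hψ using hprey
  refine ⟨ψ, fun x _ y _ hxy => ?_⟩
  rw [huniq x _ _ (hψ x) ((hψ y).of_hasWalk (hasWalk_one hxy))]
  push_cast
  ring

theorem reachable_imp_adj_of_potential (hG : ∀ᶠ m in atTop, D.compGraph m = G)
    (hsurj : SurjOn ℓ T univ) (hprey : ∀ x, ∃ c, D.PreysEventually T ℓ x c) {ψ : V → ZMod K}
    (hψ : D.IsImprimLabelling univ ψ) (hψT : EqOn ψ ℓ T) :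
    ∀ x y, x ≠ y → G.Reachable x y → G.Adj x y := by
  have hψwalk : ∀ m, ∀ x ∈ univ, ∀ z, D.HasWalk m x z → ψ z = ψ x + m :=
    fun _ _ _ _ h => hψ.eq_add_of_hasWalkIn (hasWalk_iff_hasWalkIn_univ.1 h)
  have hpe : ∀ x, D.PreysEventually T ℓ x (ψ x) := by
    intro x
    obtain ⟨c, hc⟩ := hprey x
    obtain rfl := hc.eq_of_forall_hasWalk hsurj fun m z hz h =>
      (hψT hz).symm.trans (hψwalk m x trivial z h)
    exact hc
  intro x y hxy hreach
  have hψxy : ψ x = ψ y := by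
    rw [SimpleGraph.reachable_iff_reflTransGen] at hreach
    clear hxy
    induction hreach with
    | refl => rfl
    | tail _ hab ih => exact ih.trans (eq_of_compGraph_adj hG hψwalk trivial trivial hab)
  exact (hpe x).compGraph_adj hG hsurj (hψxy ▸ hpe y) hxy

end Prey

section LinConn

variable {η : ℕ} {Vset : ℕ → Set V}

lemma IsLinConn.isStronglyConnectedOn (hD : D.IsLinConn η Vset) {i : ℕ} (h1 : 1 ≤ i)
    (h2 : i ≤ η) : D.IsStronglyConnectedOn (Vset i) :=
  hD.strong i h1 h2

lemma IsLinConn.imprimIndex_ne_zero (hD : D.IsLinConn η Vset) {i k : ℕ} (h1 : 1 ≤ i) (h2 : i ≤ η)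
    (hnt : ¬ IsTrivialComp (Vset i)) (hκ : D.IsImprimIndex (Vset i) k) : k ≠ 0 :=
  hκ.ne_zero (hD.isStronglyConnectedOn h1 h2) hnt (hD.nonempty i h1 h2)

lemma IsLinConn.mem_last_of_adj (hD : D.IsLinConn η Vset) (hx : x ∈ Vset η) (h : D.Adj x y) :
    y ∈ Vset η := by
  obtain ⟨i, hi, ⟨hiη, hxi, hyi⟩ | ⟨hiη, hxi, -⟩⟩ := hD.arcs x y h
  · rwa [hD.disjoint' η i (by omega) le_rfl hi hiη x hx hxi]
  · have := hD.disjoint' η i (by omega) le_rfl hi (by omega) x hx hxi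
    omega

lemma IsLinConn.exists_hasWalk_to_last (hD : D.IsLinConn η Vset) (x : V) :
    ∃ m, ∃ z ∈ Vset η, D.HasWalk m x z := by
  obtain ⟨p, hp, hpη, hx⟩ := hD.cover x
  induction hpη using Nat.decreasingInduction generalizing x with
  | self => exact ⟨0, x, hx, (hasWalkIn_zero hx).hasWalk⟩
  | of_succ p hpη ih =>
    obtain ⟨a, ha, b, hb, hab⟩ := hD.linked p hp hpη
    obtain ⟨s, hxa⟩ := hD.strong p hp hpη.le x hx a ha
    obtain ⟨m, z, hz, hbz⟩ := ih b (by omega) hb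
    exact ⟨s + 1 + m, z, hz, (hxa.hasWalk.append (hasWalk_one hab)).append hbz⟩

def ReducedLabelsCompatible (D : Digraph' V) (η : ℕ) (Vset : ℕ → Set V) {κ : ℕ → ℕ}
    (u : ∀ i : ℕ, V → ZMod (κ i)) : Prop :=
  ∀ p, 1 ≤ p → p + 1 ≤ η → κ η ∣ κ p ∧
    ∀ (i : ZMod (κ p)) (j : ZMod (κ (p + 1))) (i' : ZMod (κ p)) (j' : ZMod (κ (p + 1))),
      InI D Vset u p i j → InI D Vset u p i' j' →
      (i.val : ZMod (κ η)) - (j.val : ZMod (κ η)) = (i'.val : ZMod (κ η)) - (j'.val : ZMod (κ η))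

variable {κ : ℕ → ℕ} {u : ∀ i : ℕ, V → ZMod (κ i)}

theorem IsLinConn.reducedLabelsCompatible_of_potential (hD : D.IsLinConn η Vset)
    (hnt : ∀ i, 1 ≤ i → i ≤ η → ¬ IsTrivialComp (Vset i))
    (hκ : ∀ i, 1 ≤ i → i ≤ η → IsImprimIndex D (Vset i) (κ i))
    (hu : ∀ i, 1 ≤ i → i ≤ η → IsImprimLabelling D (Vset i) (u i)) {ψ : V → ZMod (κ η)}
    (hψ : D.IsImprimLabelling univ ψ) : D.ReducedLabelsCompatible η Vset u := by
  have hdvd : ∀ p, 1 ≤ p → p ≤ η → κ η ∣ κ p := fun p h1 h2 =>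
    (hκ p h1 h2).dvd_of_isImprimLabelling (hψ.mono (subset_univ _))
  have hoffset : ∀ p, 1 ≤ p → p ≤ η → ∀ x ∈ Vset p, ∀ y ∈ Vset p,
      ψ y - ((u p y).val : ZMod (κ η)) = ψ x - ((u p x).val : ZMod (κ η)) := by
    intro p h1 h2 x hx y hy
    have : NeZero (κ p) := ⟨hD.imprimIndex_ne_zero h1 h2 (hnt p h1 h2) (hκ p h1 h2)⟩
    simp only [ZMod.natCast_val]
    exact (hψ.mono (subset_univ _)).sub_eq_sub (hD.isStronglyConnectedOn h1 h2)
      ((hu p h1 h2).cast (hdvd p h1 h2)) hx hy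
  intro p h1 h2
  refine ⟨hdvd p h1 (by omega), ?_⟩
  rintro - - - - ⟨x, hx, y, hy, hxy, rfl, rfl⟩ ⟨x', hx', y', hy', hxy', rfl, rfl⟩
  have hx'x := hoffset p h1 (by omega) x hx x' hx'
  have hy'y := hoffset (p + 1) (by omega) h2 y hy y' hy'
  linear_combination hx'x - hy'y - hψ x trivial y trivial hxy + hψ x' trivial y' trivial hxy'

theorem IsLinConn.exists_potential_of_reducedLabelsCompatible (hD : D.IsLinConn η Vset)
    (hnt : ∀ i, 1 ≤ i → i ≤ η → ¬ IsTrivialComp (Vset i))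
    (hκ : ∀ i, 1 ≤ i → i ≤ η → IsImprimIndex D (Vset i) (κ i))
    (hu : ∀ i, 1 ≤ i → i ≤ η → IsImprimLabelling D (Vset i) (u i)) (hη : 1 ≤ η)
    (hcond : D.ReducedLabelsCompatible η Vset u) :
    ∃ ψ : V → ZMod (κ η), D.IsImprimLabelling univ ψ ∧ EqOn ψ (u η) (Vset η) := by
  have hdvd : ∀ p, 1 ≤ p → p ≤ η → κ η ∣ κ p := fun p h1 h2 =>
    h2.eq_or_lt.elim (fun h => h ▸ dvd_rfl) fun h => (hcond p h1 h).1
  have hne : ∀ p, 1 ≤ p → p ≤ η → NeZero (κ p) := fun p h1 h2 =>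
    ⟨hD.imprimIndex_ne_zero h1 h2 (hnt p h1 h2) (hκ p h1 h2)⟩
  set r : ℕ → V → ZMod (κ η) := fun p v => ZMod.cast (u p v)
  have hδ : ∀ p, ∃ δ : ZMod (κ η), 1 ≤ p → p + 1 ≤ η →
      ∀ x ∈ Vset p, ∀ y ∈ Vset (p + 1), D.Adj x y → r p x - r (p + 1) y = δ := by
    intro p
    by_cases hp : 1 ≤ p ∧ p + 1 ≤ η
    · obtain ⟨a, ha, b, hb, hab⟩ := hD.linked p hp.1 hp.2
      refine ⟨r p a - r (p + 1) b, fun _ _ x hx y hy hxy => ?_⟩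
      have := hne p hp.1 (by omega)
      have := hne (p + 1) (by omega) hp.2
      simpa only [r, ← ZMod.natCast_val] using (hcond p hp.1 hp.2).2 _ _ _ _
        ⟨x, hx, y, hy, hxy, rfl, rfl⟩ ⟨a, ha, b, hb, hab, rfl, rfl⟩
    · exact ⟨0, fun h1 h2 => absurd ⟨h1, h2⟩ hp⟩
  choose δ hδ using hδ
  choose P hP using hD.cover
  -- the offset of component `p` is pinned down by `e η = 0` and `e p = e (p + 1) - (δ p + 1)`
  set e : ℕ → ZMod (κ η) := fun p => -∑ j ∈ Finset.Ico p η, (δ j + 1)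
  have hPeq : ∀ v p, 1 ≤ p → p ≤ η → v ∈ Vset p → r (P v) v + e (P v) = r p v + e p := by
    intro v p h1 h2 hv
    rw [hD.disjoint' _ p (hP v).1 (hP v).2.1 h1 h2 v (hP v).2.2 hv]
  refine ⟨fun v => r (P v) v + e (P v), fun v _ w _ hvw => ?_, fun z hz => ?_⟩
  · obtain ⟨i, hi, ⟨hiη, hv, hw⟩ | ⟨hiη, hv, hw⟩⟩ := hD.arcs v w hvw
    · simp only [hPeq v i hi hiη hv, hPeq w i hi hiη hw, r, hu i hi hiη v hv w hw hvw,
        ZMod.cast_add (hdvd i hi hiη), ZMod.cast_one (hdvd i hi hiη)]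
      ring
    · have he : e i = e (i + 1) - (δ i + 1) := by
        simp only [e, Finset.sum_eq_sum_Ico_succ_bot (show i < η by omega)]
        ring
      simp only [hPeq v i hi (by omega) hv, hPeq w (i + 1) (by omega) hiη hw, he]
      linear_combination -hδ i hi hiη v hv w hw hvw
  · simp only [hPeq z η hη le_rfl hz, r, e, Finset.Ico_self, Finset.sum_empty, neg_zero,
      add_zero, ZMod.cast_id]

end LinConn

end Digraph'

open Digraph' in
/-- the limit of `{C(D^m)}` is a disjoint union of complete graphs iff
`κ_η` divides every `κ_p` and the differences `red(i) − red(j)` over `I(D_{p,p+1})`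
are constant mod `κ_η`. -/
theorem stmt11 {V : Type*} [Fintype V] (D : Digraph' V) (η : ℕ) (Vset : ℕ → Set V)
    (hD : D.IsLinConn η Vset) (hη : 2 ≤ η)
    (hnt : ∀ i, 1 ≤ i → i ≤ η → ¬ IsTrivialComp (Vset i))
    (κ : ℕ → ℕ) (u : ∀ i : ℕ, V → ZMod (κ i))
    (hκ : ∀ i, 1 ≤ i → i ≤ η → IsImprimIndex D (Vset i) (κ i))
    (hu : ∀ i, 1 ≤ i → i ≤ η → IsImprimLabelling D (Vset i) (u i))
    (G : SimpleGraph V) (hG : D.CompConvergesTo G) :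
    (∀ x y : V, x ≠ y → G.Reachable x y → G.Adj x y) ↔
    (∀ p, 1 ≤ p → p + 1 ≤ η → κ η ∣ κ p ∧
      ∀ (i : ZMod (κ p)) (j : ZMod (κ (p + 1))) (i' : ZMod (κ p)) (j' : ZMod (κ (p + 1))),
        InI D Vset u p i j → InI D Vset u p i' j' →
        (i.val : ZMod (κ η)) - (j.val : ZMod (κ η)) =
          (i'.val : ZMod (κ η)) - (j'.val : ZMod (κ η))) := by
  have h1 : 1 ≤ η := by omega
  have hT := hD.isStronglyConnectedOn h1 le_rfl
  have : NeZero (κ η) := ⟨hD.imprimIndex_ne_zero h1 le_rfl (hnt η h1 le_rfl) (hκ η h1 le_rfl)⟩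
  have hsurj := (hu η h1 le_rfl).surjOn hT (hnt η h1 le_rfl) (hD.nonempty η h1 le_rfl)
  have hℓ : ∀ m, ∀ z ∈ Vset η, ∀ w, D.HasWalk m z w → u η w = u η z + m := fun _ _ hz _ h =>
    (hu η h1 le_rfl).eq_add_of_hasWalkIn
      (h.hasWalkIn_of_forall_adj (fun _ hx _ => hD.mem_last_of_adj hx) hz)
  have hpreyT : ∀ z ∈ Vset η, D.PreysEventually (Vset η) (u η) z (u η z) :=
    fun _ hz => (hκ η h1 le_rfl).preysEventually hT (hu η h1 le_rfl) hz
  have hprey := exists_preysEventually hD.exists_hasWalk_to_last hpreyT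
  obtain ⟨N, -, hN⟩ := hG
  have hG' : ∀ᶠ m in Filter.atTop, D.compGraph m = G := Filter.eventually_atTop.2 ⟨N, hN⟩
  constructor
  · intro hclique
    obtain ⟨ψ, hψ⟩ := exists_potential_of_reachable_imp_adj hG' hsurj hℓ hpreyT hprey hclique
    exact hD.reducedLabelsCompatible_of_potential hnt hκ hu hψ
  · intro hcond
    obtain ⟨ψ, hψ, hψT⟩ := hD.exists_potential_of_reducedLabelsCompatible hnt hκ hu h1 hcond
    exact reachable_imp_adj_of_potential hG' hsurj hprey hψ hψT
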